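/- arXiv:2412.17681 — 5 statements merged into one kernel-verified Lean document; each statement's English description precedes it below -/
import Mathlib

section
/- Let A be a finite-dimensional algebra over a field k, let Z be an A-module decomposing as Z = 𝟙 ⊕ W (i.e., 𝟙 is a direct summand of Z in a k-linear category C with End(𝟙) = k), and let N ⊆ End(Z) be a k-subspace with N^n = 0 for some n (meaning every product of n elements of N is zero). Then there exists a retraction r : Z → 𝟙 (i.e., r admits a section) such that r ∘ x ∘ a = 0 for every x ∈ N and every morphism a : 𝟙 → Z. -/
/-!
Among the products `p` of elements of `N` that occur in a nonzero composite `a ≫ p ≫ b : 𝟙 ⟶ 𝟙`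
(the empty product does, through the given section and retraction) pick one of maximal
length `m`; nilpotence bounds `m`. Since `End(𝟙) = k`, rescaling `p ≫ b` gives a retraction `r`
with section `a`, and every `a' ≫ x ≫ r` with `x ∈ N` is a multiple of a composite through a
product of length `m + 1`, hence zero.
-/

open CategoryTheory Limits Pointwise

theorem Nat.exists_and_not_add_one_of_not {Q : ℕ → Prop} (h0 : Q 0) {n : ℕ} (hn : ¬ Q n) :
    ∃ m, Q m ∧ ¬ Q (m + 1) := by
  by_contra! h
  exact hn (Nat.rec h0 h n)

section

variable {k C : Type*} [Field k] [Category C] [Preadditive C] [Linear k C]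
  {Z I : C}

theorem exists_smul_eq_id_of_ne_zero (hI : ∀ f : I ⟶ I, ∃ c : k, f = c • 𝟙 I) {f : I ⟶ I}
    (hf : f ≠ 0) : ∃ c : k, c • f = 𝟙 I := by
  obtain ⟨c, rfl⟩ := hI f
  have hc : c ≠ 0 := by rintro rfl; simp at hf
  exact ⟨c⁻¹, by rw [smul_smul, inv_mul_cancel₀ hc, one_smul]⟩

theorem exists_retraction_of_comp_ne_zero (hI : ∀ f : I ⟶ I, ∃ c : k, f = c • 𝟙 I)
    {N : Set (End Z)} {p : End Z} {a : I ⟶ Z} {b : Z ⟶ I} (hab : a ≫ p ≫ b ≠ 0)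
    (hN : ∀ x ∈ N, ∀ (a' : I ⟶ Z) (b' : Z ⟶ I), a' ≫ (x ≫ p) ≫ b' = 0) :
    ∃ r : Z ⟶ I, (∃ s : I ⟶ Z, s ≫ r = 𝟙 I) ∧
      ∀ x ∈ N, ∀ a' : I ⟶ Z, a' ≫ x ≫ r = 0 := by
  obtain ⟨c, hc⟩ := exists_smul_eq_id_of_ne_zero hI hab
  refine ⟨c • (p ≫ b), ⟨a, by rwa [Linear.comp_smul]⟩, fun x hx a' => ?_⟩
  simpa [Linear.comp_smul] using congrArg (c • ·) (hN x hx a' b)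

end

/-- Let `C` be a `k`-linear category with `End(I) = k·id`, let `I` be a
direct summand of `Z`, and let `N ⊆ End(Z)` be a nilpotent subspace (every product of `n`
elements of `N` vanishes for some `n ≥ 1`). Then there is a retraction `r : Z ⟶ I`
(admitting a section `s` with `s ≫ r = 𝟙 I`) such that `a ≫ x ≫ r = 0` for all `x ∈ N`
and all `a : I ⟶ Z`. -/
theorem statement1 (k : Type*) [Field k] (C : Type*) [Category C] [Preadditive C] [Linear k C]
    (Z I : C)
    (hI : ∀ f : I ⟶ I, ∃ c : k, f = c • 𝟙 I)
    (hsummand : ∃ (r : Z ⟶ I) (s : I ⟶ Z), s ≫ r = 𝟙 I)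
    (N : Submodule k (CategoryTheory.End Z))
    (hN : ∃ n : ℕ, 0 < n ∧ ∀ f : Fin n → CategoryTheory.End Z,
      (∀ i, f i ∈ N) → (List.ofFn f).prod = 0) :
    ∃ (r : Z ⟶ I), (∃ s : I ⟶ Z, s ≫ r = 𝟙 I) ∧
      ∀ x ∈ N, ∀ a : I ⟶ Z, a ≫ x ≫ r = 0 := by
  obtain ⟨r₀, s₀, hsr⟩ := hsummand
  by_cases hI0 : IsZero I
  · exact ⟨r₀, ⟨s₀, hsr⟩, fun _ _ _ => hI0.eq_of_src _ _⟩
  obtain ⟨n, -, hNn⟩ := hN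
  have hpow : ∀ q ∈ (N : Set (End Z)) ^ n, q = 0 := by
    rintro q hq
    obtain ⟨f, rfl⟩ := Set.mem_pow.1 hq
    exact hNn (fun i => f i) fun i => (f i).2
  obtain ⟨m, ⟨p, hp, a, b, hab⟩, hmax⟩ := Nat.exists_and_not_add_one_of_not
    (n := n)
    (Q := fun j => ∃ p ∈ (N : Set (End Z)) ^ j, ∃ (a : I ⟶ Z) (b : Z ⟶ I), a ≫ p ≫ b ≠ 0)
    ⟨1, by simp, s₀, r₀, by simpa [End.one_def, hsr, ← IsZero.iff_id_eq_zero] using hI0⟩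
    (by rintro ⟨q, hq, a, b, hab⟩; simp [hpow q hq] at hab)
  push Not at hmax
  -- `p * x = x ≫ p` in `End Z`
  exact exists_retraction_of_comp_ne_zero hI hab fun x hx =>
    hmax (p * x) (pow_succ (N : Set (End Z)) m ▸ Set.mul_mem_mul hp hx)
end

section
/- Let C be an abelian braided monoidal category with right exact tensor product, and let 0 → Y → Z → X → 0 be a short exact sequence in C. If X and Y are rigid, then Z is rigid. -/
/-!
Write `S` as `0 → Y → Z → X → 0` and let `X'`, `Y'` be right duals of `X`, `Y`. Pulling back
`Z ⊗ X' ⟶ X ⊗ X'` along the coevaluation of `X` gives an extension `0 → Y ⊗ X' → E → 𝟙 → 0`.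
The two natural maps `E ⊗ Z ⟶ Z` (evaluate the `Z ⊗ X'` component through `Z ⟶ X`, or use the
`𝟙` component) agree after projecting to `X` by the zigzag identity of `X`, so their difference
factors through `Y`. Using the evaluation of `Y`, push out `Y' ⊗ E` and `X'` over
`Y' ⊗ Y ⊗ X'` to get an object `D`: the pairing `D ⊗ Z ⟶ 𝟙` is glued from the two pieces, and
a copairing `𝟙 ⟶ Z ⊗ D` descends along the cokernel `E ⟶ 𝟙` of `Y ⊗ X' ⟶ E`.

These satisfy the zigzag identity on `Z` only. That alone makes the zigzag composite on `D`
idempotent, and its image (abelian categories are idempotent complete) is a genuine right dual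
of `Z`. In a braided category a right dual is also a left dual.
-/

open CategoryTheory MonoidalCategory Limits

/-- An object is rigid if it has both a left dual and a right dual (with exact pairings). -/
def RigidObj {C : Type*} [Category C] [MonoidalCategory C] (X : C) : Prop :=
  Nonempty (HasLeftDual X) ∧ Nonempty (HasRightDual X)

namespace CategoryTheory.MonoidalCategory

section Zigzag

variable {C : Type*} [Category C] [MonoidalCategory C] {Z D : C}

def zigzagEndo (η : 𝟙_ C ⟶ Z ⊗ D) (ε : D ⊗ Z ⟶ 𝟙_ C) : D ⟶ D :=
  (ρ_ D).inv ≫ D ◁ η ≫ (α_ D Z D).inv ≫ ε ▷ D ≫ (λ_ D).hom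

variable (η : 𝟙_ C ⟶ Z ⊗ D) (ε : D ⊗ Z ⟶ 𝟙_ C)

theorem zigzagEndo_whiskerRight_comp
    (h : η ▷ Z ≫ (α_ Z D Z).hom ≫ Z ◁ ε = (λ_ Z).hom ≫ (ρ_ Z).inv) :
    zigzagEndo η ε ▷ Z ≫ ε = ε := by
  calc _ = 𝟙 _ ⊗≫ D ◁ η ▷ Z ⊗≫ (ε ▷ (D ⊗ Z) ≫ 𝟙_ C ◁ ε) ⊗≫ 𝟙 _ := by
        simp only [zigzagEndo]; monoidal
    _ = 𝟙 _ ⊗≫ D ◁ (η ▷ Z ≫ (α_ Z D Z).hom ≫ Z ◁ ε) ⊗≫ ε ▷ 𝟙_ C ⊗≫ 𝟙 _ := by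
        rw [← whisker_exchange]; monoidal
    _ = ε := by rw [h]; monoidal

theorem comp_zigzagEndo {φ : D ⟶ D} (hφ : φ ▷ Z ≫ ε = ε) :
    φ ≫ zigzagEndo η ε = zigzagEndo η ε := by
  calc φ ≫ zigzagEndo η ε
      = (ρ_ D).inv ≫ D ◁ η ≫ (α_ D Z D).inv ≫ (φ ▷ Z ≫ ε) ▷ D ≫ (λ_ D).hom := by
        simp only [zigzagEndo, rightUnitor_inv_naturality_assoc, ← whisker_exchange_assoc,
          associator_inv_naturality_left_assoc, comp_whiskerRight, Category.assoc]
    _ = zigzagEndo η ε := by rw [hφ]; rfl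

variable {η ε} {D' : C} {ι : D' ⟶ D} {π : D ⟶ D'}

theorem coevaluation_evaluation_of_retract (hιπ : ι ≫ π = 𝟙 D')
    (hπι : π ≫ ι = zigzagEndo η ε) :
    D' ◁ (η ≫ Z ◁ π) ≫ (α_ D' Z D').inv ≫ (ι ▷ Z ≫ ε) ▷ D' = (ρ_ D').hom ≫ (λ_ D').inv := by
  calc _ = 𝟙 _ ⊗≫ D' ◁ η ⊗≫ ((D' ⊗ Z) ◁ π ≫ (ι ▷ Z) ▷ D') ⊗≫ ε ▷ D' ⊗≫ 𝟙 _ := by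
        monoidal
    _ = 𝟙 _ ⊗≫ (D' ◁ η ≫ ι ▷ (Z ⊗ D)) ⊗≫ ((D ⊗ Z) ◁ π ≫ ε ▷ D') ⊗≫ 𝟙 _ := by
        rw [whisker_exchange]; monoidal
    _ = (ρ_ D').hom ≫ (ι ≫ (π ≫ ι) ≫ π) ≫ (λ_ D').inv := by
        rw [whisker_exchange, whisker_exchange, hπι, zigzagEndo]; monoidal
    _ = _ := by simp only [Category.assoc, reassoc_of% hιπ, hιπ, Category.id_comp]

theorem evaluation_coevaluation_of_retract (hπι : π ≫ ι = zigzagEndo η ε)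
    (h : η ▷ Z ≫ (α_ Z D Z).hom ≫ Z ◁ ε = (λ_ Z).hom ≫ (ρ_ Z).inv) :
    (η ≫ Z ◁ π) ▷ Z ≫ (α_ Z D' Z).hom ≫ Z ◁ (ι ▷ Z ≫ ε) = (λ_ Z).hom ≫ (ρ_ Z).inv := by
  calc _ = η ▷ Z ≫ (α_ Z D Z).hom ≫ Z ◁ ((π ≫ ι) ▷ Z ≫ ε) := by
        simp only [comp_whiskerRight, MonoidalCategory.whiskerLeft_comp, Category.assoc,
          associator_naturality_middle_assoc]
    _ = _ := by rw [hπι, zigzagEndo_whiskerRight_comp η ε h, h]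

variable (η ε)

theorem nonempty_hasRightDual_of_evaluation_coevaluation [IsIdempotentComplete C]
    (h : η ▷ Z ≫ (α_ Z D Z).hom ≫ Z ◁ ε = (λ_ Z).hom ≫ (ρ_ Z).inv) :
    Nonempty (HasRightDual Z) := by
  obtain ⟨D', ι, π, hιπ, hπι⟩ := IsIdempotentComplete.idempotents_split D (zigzagEndo η ε)
    (comp_zigzagEndo η ε (zigzagEndo_whiskerRight_comp η ε h))
  let _ : ExactPairing Z D' := ⟨η ≫ Z ◁ π, ι ▷ Z ≫ ε,
    coevaluation_evaluation_of_retract hιπ hπι, evaluation_coevaluation_of_retract hπι h⟩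
  exact ⟨⟨D'⟩⟩

end Zigzag

instance isRightAdjoint_tensorRight_rightDual {C : Type*} [Category C] [MonoidalCategory C]
    (X : C) [HasRightDual X] :
    (tensorRight Xᘁ).IsRightAdjoint :=
  (tensorRightAdjunction X Xᘁ).isRightAdjoint

end CategoryTheory.MonoidalCategory

noncomputable section

namespace CategoryTheory.ShortComplex

variable {C : Type*} [Category C] [Abelian C] [MonoidalCategory C] (S : ShortComplex C)

section CoevPullback

variable [HasRightDual S.X₃]

abbrev coevPullback : ShortComplex C where
  X₁ := S.X₁ ⊗ S.X₃ᘁ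
  X₂ := pullback (S.g ▷ S.X₃ᘁ) (η_ S.X₃ S.X₃ᘁ)
  X₃ := 𝟙_ C
  f := pullback.lift (S.f ▷ S.X₃ᘁ) 0 (by
    rw [← comp_whiskerRight, S.zero, zero_comp]
    exact (tensorRight S.X₃ᘁ).map_zero _ _)
  g := pullback.snd _ _
  zero := pullback.lift_snd _ _ _

theorem coevPullback_f_fst : S.coevPullback.f ≫ pullback.fst _ _ = S.f ▷ S.X₃ᘁ :=
  pullback.lift_fst _ _ _

theorem coevPullback_fst_g :
    pullback.fst _ _ ≫ S.g ▷ S.X₃ᘁ = S.coevPullback.g ≫ η_ S.X₃ S.X₃ᘁ :=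
  pullback.condition

variable {S}

theorem coevPullback_shortExact (hS : S.ShortExact) [Epi (S.g ▷ S.X₃ᘁ)] :
    S.coevPullback.ShortExact := by
  have := hS.mono_f
  have : Mono (S.f ▷ S.X₃ᘁ) := by simpa using (tensorRight S.X₃ᘁ).map_mono S.f
  have : Mono S.coevPullback.f := mono_of_mono_fac S.coevPullback_f_fst
  have hker := isLimitForkMapOfIsLimit' (tensorRight S.X₃ᘁ) S.zero hS.fIsKernel
  have hlim : IsLimit (KernelFork.ofι S.coevPullback.f S.coevPullback.zero) := by
    refine KernelFork.IsLimit.ofι' _ _ fun {A} a ha => ?_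
    have hfst : (a ≫ pullback.fst _ _) ≫ S.g ▷ S.X₃ᘁ = 0 := by
      rw [Category.assoc, coevPullback_fst_g, ← Category.assoc, ha, zero_comp]
    refine ⟨hker.lift (KernelFork.ofι _ hfst), pullback.hom_ext ?_ ?_⟩
    · rw [Category.assoc, coevPullback_f_fst]
      exact hker.fac (KernelFork.ofι _ hfst) WalkingParallelPair.zero
    · rw [Category.assoc, S.coevPullback.zero, comp_zero]
      exact ha.symm
  exact .mk' (exact_of_f_is_kernel _ hlim) inferInstance (inferInstanceAs (Epi (pullback.snd _ _)))

end CoevPullback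

section Contract

variable [HasRightDual S.X₃]

def evalG : S.X₃ᘁ ⊗ S.X₂ ⟶ 𝟙_ C := S.X₃ᘁ ◁ S.g ≫ ε_ S.X₃ S.X₃ᘁ

def contractFst : S.coevPullback.X₂ ⊗ S.X₂ ⟶ S.X₂ :=
  pullback.fst _ _ ▷ S.X₂ ≫ (α_ _ _ _).hom ≫ S.X₂ ◁ S.evalG ≫ (ρ_ S.X₂).hom

def contractSnd : S.coevPullback.X₂ ⊗ S.X₂ ⟶ S.X₂ :=
  S.coevPullback.g ▷ S.X₂ ≫ (λ_ S.X₂).hom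

theorem contractFst_g : S.contractFst ≫ S.g = S.contractSnd ≫ S.g := by
  calc S.contractFst ≫ S.g
      = (pullback.fst _ _ ≫ S.g ▷ S.X₃ᘁ) ▷ S.X₂ ≫ (α_ _ _ _).hom ≫ S.X₃ ◁ S.evalG ≫
          (ρ_ S.X₃).hom := by
        simp only [contractFst, Category.assoc, rightUnitor_naturality, ← whisker_exchange_assoc,
          associator_naturality_left_assoc, comp_whiskerRight]
    _ = S.coevPullback.g ▷ S.X₂ ≫ 𝟙_ C ◁ S.g ≫ η_ S.X₃ S.X₃ᘁ ▷ S.X₃ ≫ (α_ _ _ _).hom ≫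
          S.X₃ ◁ ε_ S.X₃ S.X₃ᘁ ≫ (ρ_ S.X₃).hom := by
        rw [coevPullback_fst_g, comp_whiskerRight_assoc, evalG, whiskerLeft_comp, Category.assoc,
          ← associator_naturality_right_assoc, ← whisker_exchange_assoc]
    _ = S.contractSnd ≫ S.g := by
        rw [ExactPairing.evaluation_coevaluation_assoc]
        simp [contractSnd]

variable {S} (hS : S.ShortExact)

def contract : S.coevPullback.X₂ ⊗ S.X₂ ⟶ S.X₁ :=
  haveI := hS.mono_f
  hS.exact.lift (S.contractFst - S.contractSnd)
    (by rw [Preadditive.sub_comp, S.contractFst_g, sub_self])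

theorem contract_f : contract hS ≫ S.f = S.contractFst - S.contractSnd :=
  haveI := hS.mono_f
  hS.exact.lift_f _ _

theorem coevPullback_f_whiskerRight_contract [(tensorRight S.X₂).PreservesZeroMorphisms] :
    S.coevPullback.f ▷ S.X₂ ≫ contract hS = (α_ _ _ _).hom ≫ S.X₁ ◁ S.evalG ≫ (ρ_ S.X₁).hom := by
  have := hS.mono_f
  rw [← cancel_mono S.f, Category.assoc, contract_f, Preadditive.comp_sub, contractFst, contractSnd,
    ← comp_whiskerRight_assoc, coevPullback_f_fst, ← comp_whiskerRight_assoc, S.coevPullback.zero]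
  have h0 : (0 : S.coevPullback.X₁ ⟶ 𝟙_ C) ▷ S.X₂ = 0 := (tensorRight S.X₂).map_zero _ _
  rw [h0, zero_comp, sub_zero, associator_naturality_left_assoc, ← whisker_exchange_assoc,
    rightUnitor_naturality]
  simp only [Category.assoc]

end Contract

section PreDual

variable [HasRightDual S.X₁] [HasRightDual S.X₃]

def evalX₁ : S.X₁ᘁ ⊗ S.coevPullback.X₁ ⟶ S.X₃ᘁ :=
  (α_ _ _ _).inv ≫ ε_ S.X₁ S.X₁ᘁ ▷ S.X₃ᘁ ≫ (λ_ S.X₃ᘁ).hom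

abbrev preDual : C := pushout (S.X₁ᘁ ◁ S.coevPullback.f) S.evalX₁

variable {S} (hS : S.ShortExact)

theorem whiskerRight_evalX₁_evalG [(tensorRight S.X₂).PreservesZeroMorphisms] :
    S.evalX₁ ▷ S.X₂ ≫ S.evalG =
      (S.X₁ᘁ ◁ S.coevPullback.f) ▷ S.X₂ ≫ (α_ _ _ _).hom ≫ S.X₁ᘁ ◁ contract hS ≫ ε_ S.X₁ S.X₁ᘁ := by
  calc _ = 𝟙 _ ⊗≫ ((S.X₁ᘁ ⊗ S.X₁ : C) ◁ S.evalG ≫ ε_ S.X₁ S.X₁ᘁ ▷ 𝟙_ C) ⊗≫ 𝟙 _ := by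
        rw [whisker_exchange, evalX₁]; monoidal
    _ = 𝟙 _ ⊗≫ (S.X₁ᘁ : C) ◁ (S.coevPullback.f ▷ S.X₂ ≫ contract hS) ⊗≫ ε_ S.X₁ S.X₁ᘁ := by
        rw [coevPullback_f_whiskerRight_contract]; monoidal
    _ = _ := by monoidal

def preDualEval [PreservesFiniteColimits (tensorRight S.X₂)] :
    S.preDual ⊗ S.X₂ ⟶ 𝟙_ C :=
  PushoutCocone.IsColimit.desc
    (isColimitPushoutCoconeMapOfIsColimit (tensorRight S.X₂) pushout.condition
      (pushoutIsPushout _ _))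
    ((α_ _ _ _).hom ≫ S.X₁ᘁ ◁ contract hS ≫ ε_ S.X₁ S.X₁ᘁ) S.evalG
    (whiskerRight_evalX₁_evalG hS).symm

theorem inl_whiskerRight_preDualEval [PreservesFiniteColimits (tensorRight S.X₂)] :
    pushout.inl (S.X₁ᘁ ◁ S.coevPullback.f) S.evalX₁ ▷ S.X₂ ≫ preDualEval hS =
      (α_ _ _ _).hom ≫ (S.X₁ᘁ : C) ◁ contract hS ≫ ε_ S.X₁ S.X₁ᘁ :=
  PushoutCocone.IsColimit.inl_desc (isColimitPushoutCoconeMapOfIsColimit (tensorRight S.X₂)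
    pushout.condition (pushoutIsPushout _ _)) _ _ _

theorem inr_whiskerRight_preDualEval [PreservesFiniteColimits (tensorRight S.X₂)] :
    pushout.inr (S.X₁ᘁ ◁ S.coevPullback.f) S.evalX₁ ▷ S.X₂ ≫ preDualEval hS = S.evalG :=
  PushoutCocone.IsColimit.inr_desc (isColimitPushoutCoconeMapOfIsColimit (tensorRight S.X₂)
    pushout.condition (pushoutIsPushout _ _)) _ _ _

variable (S)

def coevFst : S.coevPullback.X₂ ⟶ S.X₂ ⊗ S.preDual :=
  pullback.fst _ _ ≫ S.X₂ ◁ pushout.inr _ _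

def coevSnd : S.coevPullback.X₂ ⟶ S.X₂ ⊗ S.preDual :=
  (λ_ _).inv ≫ η_ S.X₁ S.X₁ᘁ ▷ _ ≫ (α_ _ _ _).hom ≫ S.X₁ ◁ pushout.inl _ _ ≫ S.f ▷ _

theorem coevaluation_evalX₁ :
    (λ_ _).inv ≫ η_ S.X₁ S.X₁ᘁ ▷ _ ≫ (α_ _ _ _).hom ≫ S.X₁ ◁ S.evalX₁ = 𝟙 S.coevPullback.X₁ := by
  calc _ = 𝟙 _ ⊗≫ (η_ S.X₁ S.X₁ᘁ ▷ S.X₁ ≫ (α_ _ _ _).hom ≫ S.X₁ ◁ ε_ S.X₁ S.X₁ᘁ) ▷ S.X₃ᘁ ⊗≫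
        𝟙 _ := by
        rw [evalX₁]; monoidal
    _ = _ := by rw [ExactPairing.evaluation_coevaluation]; monoidal

theorem coevPullback_f_coevFst : S.coevPullback.f ≫ S.coevFst = S.coevPullback.f ≫ S.coevSnd := by
  calc S.coevPullback.f ≫ S.coevFst = S.X₁ ◁ pushout.inr _ _ ≫ S.f ▷ _ := by
        rw [coevFst, ← Category.assoc, coevPullback_f_fst, whisker_exchange]
    _ = ((λ_ _).inv ≫ η_ S.X₁ S.X₁ᘁ ▷ _ ≫ (α_ _ _ _).hom ≫ S.X₁ ◁ S.evalX₁) ≫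
          S.X₁ ◁ pushout.inr _ _ ≫ S.f ▷ _ := by
        rw [coevaluation_evalX₁, Category.id_comp]
    _ = S.coevPullback.f ≫ S.coevSnd := by
        simp only [coevSnd, Category.assoc, ← whiskerLeft_comp_assoc, ← pushout.condition]
        simp only [whiskerLeft_comp, Category.assoc, ← associator_naturality_right_assoc,
          whisker_exchange_assoc, leftUnitor_inv_naturality_assoc]

variable {S}

def preDualCoev [Epi (S.g ▷ S.X₃ᘁ)] : 𝟙_ C ⟶ S.X₂ ⊗ S.preDual :=
  haveI := (coevPullback_shortExact hS).epi_g
  (coevPullback_shortExact hS).exact.desc (S.coevFst - S.coevSnd)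
    (by rw [Preadditive.comp_sub, coevPullback_f_coevFst, sub_self])

theorem g_preDualCoev [Epi (S.g ▷ S.X₃ᘁ)] :
    S.coevPullback.g ≫ preDualCoev hS = S.coevFst - S.coevSnd :=
  haveI := (coevPullback_shortExact hS).epi_g
  (coevPullback_shortExact hS).exact.g_desc _ _

theorem coevFst_whiskerRight_preDualEval [PreservesFiniteColimits (tensorRight S.X₂)] :
    S.coevFst ▷ S.X₂ ≫ (α_ _ _ _).hom ≫ S.X₂ ◁ preDualEval hS = S.contractFst ≫ (ρ_ S.X₂).inv := by
  rw [coevFst, comp_whiskerRight, Category.assoc, associator_naturality_middle_assoc,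
    ← whiskerLeft_comp, inr_whiskerRight_preDualEval, contractFst]
  simp only [Category.assoc, Iso.hom_inv_id, Category.comp_id]

theorem coevSnd_whiskerRight_preDualEval [PreservesFiniteColimits (tensorRight S.X₂)] :
    S.coevSnd ▷ S.X₂ ≫ (α_ _ _ _).hom ≫ S.X₂ ◁ preDualEval hS =
      contract hS ≫ S.f ≫ (ρ_ S.X₂).inv := by
  calc _ = 𝟙 _ ⊗≫ η_ S.X₁ S.X₁ᘁ ▷ (S.coevPullback.X₂ ⊗ S.X₂) ⊗≫
        S.X₁ ◁ ((pushout.inl _ _ : _ ⟶ S.preDual) ▷ S.X₂) ⊗≫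
        (S.f ▷ (S.preDual ⊗ S.X₂) ≫ S.X₂ ◁ preDualEval hS) ⊗≫ 𝟙 _ := by
        rw [coevSnd]; monoidal
    _ = 𝟙 _ ⊗≫ η_ S.X₁ S.X₁ᘁ ▷ (S.coevPullback.X₂ ⊗ S.X₂) ⊗≫
        S.X₁ ◁ ((pushout.inl _ _ : _ ⟶ S.preDual) ▷ S.X₂ ≫ preDualEval hS) ⊗≫
        S.f ▷ 𝟙_ C ⊗≫ 𝟙 _ := by
        rw [← whisker_exchange]; monoidal
    _ = 𝟙 _ ⊗≫ (η_ S.X₁ S.X₁ᘁ ▷ (S.coevPullback.X₂ ⊗ S.X₂) ≫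
        (S.X₁ ⊗ S.X₁ᘁ : C) ◁ contract hS) ⊗≫ S.X₁ ◁ ε_ S.X₁ S.X₁ᘁ ⊗≫ S.f ▷ 𝟙_ C ⊗≫ 𝟙 _ := by
        rw [inl_whiskerRight_preDualEval]; monoidal
    _ = 𝟙 _ ⊗≫ 𝟙_ C ◁ contract hS ⊗≫
        (η_ S.X₁ S.X₁ᘁ ▷ S.X₁ ≫ (α_ _ _ _).hom ≫ S.X₁ ◁ ε_ S.X₁ S.X₁ᘁ) ⊗≫ S.f ▷ 𝟙_ C ⊗≫ 𝟙 _ := by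
        rw [← whisker_exchange]; monoidal
    _ = _ := by rw [ExactPairing.evaluation_coevaluation]; monoidal

theorem preDualCoev_evaluation_coevaluation [Epi (S.g ▷ S.X₃ᘁ)]
    [PreservesFiniteColimits (tensorRight S.X₂)] :
    preDualCoev hS ▷ S.X₂ ≫ (α_ _ _ _).hom ≫ S.X₂ ◁ preDualEval hS =
      (λ_ S.X₂).hom ≫ (ρ_ S.X₂).inv := by
  have := preservesBinaryBiproducts_of_preservesBinaryCoproducts (tensorRight S.X₂)
  have := Functor.additive_of_preservesBinaryBiproducts (tensorRight S.X₂)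
  have := (coevPullback_shortExact hS).epi_g
  have : Epi (S.coevPullback.g ▷ S.X₂) := by
    simpa using (tensorRight S.X₂).map_epi S.coevPullback.g
  rw [← cancel_epi (S.coevPullback.g ▷ S.X₂)]
  calc _ = (S.coevFst - S.coevSnd) ▷ S.X₂ ≫ (α_ _ _ _).hom ≫ S.X₂ ◁ preDualEval hS := by
        rw [← comp_whiskerRight_assoc, g_preDualCoev]
    _ = S.contractFst ≫ (ρ_ S.X₂).inv - (S.contractFst - S.contractSnd) ≫ (ρ_ S.X₂).inv := by
        have hsub : (S.coevFst - S.coevSnd) ▷ S.X₂ = S.coevFst ▷ S.X₂ - S.coevSnd ▷ S.X₂ :=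
          (tensorRight S.X₂).map_sub
        rw [hsub, Preadditive.sub_comp, coevFst_whiskerRight_preDualEval,
          coevSnd_whiskerRight_preDualEval, ← Category.assoc, contract_f]
    _ = _ := by rw [← Preadditive.sub_comp, sub_sub_cancel, contractSnd, Category.assoc]

end PreDual

end CategoryTheory.ShortComplex

end

theorem statement10_general (C : Type*) [Category C] [Abelian C] [MonoidalCategory C]
    [BraidedCategory C]
    (hre₂ : ∀ W : C, PreservesFiniteColimits (tensorRight W))
    (S : ShortComplex C) (hS : S.ShortExact)
    (hY : RigidObj S.X₁) (hX : RigidObj S.X₃) :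
    RigidObj S.X₂ := by
  obtain ⟨-, ⟨_⟩⟩ := hY
  obtain ⟨-, ⟨_⟩⟩ := hX
  have := hS.epi_g
  have : Epi (S.g ▷ S.X₃ᘁ) := by simpa using (tensorRight S.X₃ᘁ).map_epi S.g
  obtain ⟨_⟩ := nonempty_hasRightDual_of_evaluation_coevaluation _ _
    (ShortComplex.preDualCoev_evaluation_coevaluation hS)
  exact ⟨⟨BraidedCategory.hasLeftDualOfHasRightDual⟩, ⟨inferInstance⟩⟩

/-- In an abelian braided monoidal category with right exact tensor
product, given a short exact sequence `0 → Y → Z → X → 0`, if `X` and `Y` are rigid then so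
is `Z`. -/
theorem statement10 (C : Type*) [Category C] [Abelian C] [MonoidalCategory C]
    [BraidedCategory C]
    (hre₁ : ∀ W : C, PreservesFiniteColimits (tensorLeft W))
    (hre₂ : ∀ W : C, PreservesFiniteColimits (tensorRight W))
    (S : ShortComplex C) (hS : S.ShortExact)
    (hY : RigidObj S.X₁) (hX : RigidObj S.X₃) :
    RigidObj S.X₂ :=
  statement10_general C hre₂ S hS hY hX
end

section
/- Let C be an abelian braided monoidal category with right exact tensor product, and let 0 → Y → Z → X → 0 be a short exact sequence in C. If Z and X are rigid, then Y is rigid. -/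
open CategoryTheory MonoidalCategory Limits

/-!
In a braided category a right dual is also a left dual, so it suffices to build a right dual
of `Y` from `0 → Y → Z → X → 0`. Dualizing the epimorphism `g` gives a monomorphism
`gᘁ : Xᘁ → Zᘁ`, and the dual of `Y` is `W = coker gᘁ`. The evaluation `W ⊗ Y → 𝟙` descends from
`Zᘁ ⊗ Y → Zᘁ ⊗ Z → 𝟙` along the epimorphism `Zᘁ ⊗ Y → W ⊗ Y`, the coevaluation lifts
`𝟙 → Z ⊗ Zᘁ → Z ⊗ W` through `Y ⊗ W → Z ⊗ W`, and the zigzag identities are inherited from those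
of `Z`. The one point that is not formal is that `Y ⊗ W → Z ⊗ W` is a monomorphism although
`- ⊗ W` is only right exact: this is a diagram chase in the 3 × 3 diagram obtained by tensoring
`0 → Y → Z → X → 0` with `0 → Xᘁ → Zᘁ → W → 0`, in which tensoring with the rigid objects `X`,
`Xᘁ` and `Zᘁ` is exact.
-/

section Monoidal

variable {C : Type*} [Category C] [MonoidalCategory C]

instance preservesLimits_tensorLeft_of_hasRightDual (X : C) [HasRightDual X] :
    PreservesLimits (tensorLeft X) :=
  (tensorLeftAdjunction X Xᘁ).rightAdjoint_preservesLimits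

instance preservesLimits_tensorRight_rightDual (X : C) [HasRightDual X] :
    PreservesLimits (tensorRight Xᘁ) :=
  (tensorRightAdjunction X Xᘁ).rightAdjoint_preservesLimits

theorem mono_rightAdjointMate_of_epi_whiskerLeft {Z X : C} [HasRightDual Z] [HasRightDual X]
    (g : Z ⟶ X) (hg : ∀ T : C, Epi (T ◁ g)) : Mono (gᘁ) := by
  refine ⟨fun {T} t₁ t₂ h => ?_⟩
  have key (t : T ⟶ Xᘁ) : T ◁ g ≫ t ▷ X ≫ ε_ X Xᘁ = (t ≫ gᘁ) ▷ Z ≫ ε_ Z Zᘁ := by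
    rw [whisker_exchange_assoc, comp_whiskerRight_assoc, rightAdjointMate_comp_evaluation]
  have : t₁ ▷ X ≫ ε_ X Xᘁ = t₂ ▷ X ≫ ε_ X Xᘁ := by
    rw [← cancel_epi (T ◁ g), key, key, h]
  simpa using congrArg (tensorRightHomEquiv T X Xᘁ (𝟙_ C)) this

/-- Cancelling `p`, resp. `f`, reduces each zigzag identity to the one for `Z` and `Z'`. -/
@[reducible]
def ExactPairing.ofMonoOfEpi {Y Z Z' W : C} [ExactPairing Z Z'] (f : Y ⟶ Z) [Mono f]
    (p : Z' ⟶ W) [Epi p] (ev : W ⊗ Y ⟶ 𝟙_ C) (coev : 𝟙_ C ⟶ Y ⊗ W)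
    (hev : p ▷ Y ≫ ev = Z' ◁ f ≫ ε_ Z Z') (hcoev : coev ≫ f ▷ W = η_ Z Z' ≫ Z ◁ p) :
    ExactPairing Y W where
  coevaluation' := coev
  evaluation' := ev
  coevaluation_evaluation' := by
    have : Epi (p ▷ 𝟙_ C) := by rw [whiskerRight_id]; infer_instance
    rw [← cancel_epi (p ▷ 𝟙_ C)]
    slice_lhs 1 2 => rw [← whisker_exchange]
    slice_lhs 2 3 => rw [associator_inv_naturality_left]
    slice_lhs 3 4 => rw [← comp_whiskerRight, hev, comp_whiskerRight]
    slice_lhs 2 3 => rw [← associator_inv_naturality_middle]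
    slice_lhs 1 2 => rw [← whiskerLeft_comp, hcoev, whiskerLeft_comp]
    slice_lhs 2 3 => rw [associator_inv_naturality_right]
    slice_lhs 3 4 => rw [whisker_exchange]
    slice_lhs 1 3 => rw [ExactPairing.coevaluation_evaluation]
    simp
  evaluation_coevaluation' := by
    rw [← cancel_mono ((ρ_ Y).hom ≫ f)]
    slice_lhs 4 5 => rw [← rightUnitor_naturality]
    slice_lhs 3 4 => rw [whisker_exchange]
    slice_lhs 2 3 => rw [← associator_naturality_left]
    slice_lhs 1 2 => rw [← comp_whiskerRight, hcoev, comp_whiskerRight]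
    slice_lhs 2 3 => rw [associator_naturality_middle]
    slice_lhs 3 4 => rw [← whiskerLeft_comp, hev, whiskerLeft_comp]
    slice_lhs 2 3 => rw [← associator_naturality_right]
    slice_lhs 1 2 => rw [← whisker_exchange]
    slice_lhs 2 4 => rw [ExactPairing.evaluation_coevaluation]
    simp

end Monoidal

section RightExact

variable {C : Type*} [Category C] [Abelian C] [MonoidalCategory C]

theorem monoidalPreadditive_of_preservesFiniteColimits
    [∀ W : C, PreservesFiniteColimits (tensorLeft W)]
    [∀ W : C, PreservesFiniteColimits (tensorRight W)] : MonoidalPreadditive C := by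
  have (F : C ⥤ C) [PreservesFiniteColimits F] : F.Additive :=
    have := preservesBinaryBiproducts_of_preservesBinaryCoproducts F
    Functor.additive_of_preservesBinaryBiproducts F
  exact
    { whiskerLeft_zero := fun {X} _ _ => (tensorLeft X).map_zero _ _
      zero_whiskerRight := fun {X} _ _ => (tensorRight X).map_zero _ _
      whiskerLeft_add := fun {X} _ _ f g => (tensorLeft X).map_add (f := f) (g := g)
      add_whiskerRight := fun {X} _ _ f g => (tensorRight X).map_add (f := f) (g := g) }

open Abelian in
open scoped Pseudoelement in
theorem mono_whiskerRight_cokernel [MonoidalPreadditive C] {S : ShortComplex C} (hS : S.ShortExact)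
    {A B : C} (h : A ⟶ B) [Mono h]
    [PreservesFiniteColimits (tensorLeft S.X₁)] [PreservesFiniteColimits (tensorLeft S.X₂)]
    [PreservesFiniteLimits (tensorLeft S.X₃)]
    [PreservesFiniteColimits (tensorRight A)] [PreservesFiniteLimits (tensorRight A)]
    [PreservesFiniteLimits (tensorRight B)] :
    Mono (S.f ▷ cokernel h) := by
  have : Mono S.f := hS.mono_f
  have : Epi (S.X₁ ◁ cokernel.π h) := (tensorLeft S.X₁).map_epi _
  have : Mono (S.X₃ ◁ h) := (tensorLeft S.X₃).map_mono h
  have : Mono (S.f ▷ B) := (tensorRight B).map_mono S.f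
  have hX₂ : (ShortComplex.mk (S.X₂ ◁ h) (S.X₂ ◁ cokernel.π h)
      (by simp [← whiskerLeft_comp])).Exact :=
    ShortComplex.exact_of_g_is_cokernel _
      (CokernelCofork.mapIsColimit _ (cokernelIsCokernel h) (tensorLeft S.X₂))
  have hA : (ShortComplex.mk (S.f ▷ A) (S.g ▷ A)
      (by simp [← comp_whiskerRight])).Exact :=
    hS.exact.map (tensorRight A)
  refine Pseudoelement.mono_of_zero_of_map_zero _ fun a ha => ?_
  obtain ⟨b, rfl⟩ := Pseudoelement.pseudo_surjective_of_epi (S.X₁ ◁ cokernel.π h) a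
  obtain ⟨c, hc⟩ := Pseudoelement.pseudo_exact_of_exact hX₂ ((S.f ▷ B) b) (by
    rw [← Pseudoelement.comp_apply, ← whisker_exchange, Pseudoelement.comp_apply, ha])
  obtain ⟨d, hd⟩ := Pseudoelement.pseudo_exact_of_exact hA c (by
    refine Pseudoelement.zero_of_map_zero _
      (Pseudoelement.pseudo_injective_of_mono (S.X₃ ◁ h)) _ ?_
    dsimp only at hc ⊢
    rw [← Pseudoelement.comp_apply, ← whisker_exchange, Pseudoelement.comp_apply, hc,
      ← Pseudoelement.comp_apply, ← comp_whiskerRight, S.zero,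
      MonoidalPreadditive.zero_whiskerRight, Pseudoelement.zero_apply])
  have hdb : (S.X₁ ◁ h) d = b := by
    apply Pseudoelement.pseudo_injective_of_mono (S.f ▷ B)
    dsimp only at hc hd
    rw [← Pseudoelement.comp_apply, whisker_exchange, Pseudoelement.comp_apply, hd, hc]
  rw [← hdb, ← Pseudoelement.comp_apply, ← whiskerLeft_comp, cokernel.condition,
    MonoidalPreadditive.whiskerLeft_zero, Pseudoelement.zero_apply]

@[reducible]
noncomputable def hasRightDualOfShortExact [∀ W : C, PreservesFiniteColimits (tensorLeft W)]
    [∀ W : C, PreservesFiniteColimits (tensorRight W)] {S : ShortComplex C} (hS : S.ShortExact)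
    [HasRightDual S.X₂] [HasRightDual S.X₃] : HasRightDual S.X₁ := by
  have := monoidalPreadditive_of_preservesFiniteColimits (C := C)
  have := hS.mono_f
  have := hS.epi_g
  have : Mono (S.gᘁ) :=
    mono_rightAdjointMate_of_epi_whiskerLeft S.g fun T => (tensorLeft T).map_epi S.g
  let D := ShortComplex.mk (S.gᘁ) (cokernel.π (S.gᘁ)) (cokernel.condition _)
  have hD : D.Exact := ShortComplex.exact_of_g_is_cokernel _ (cokernelIsCokernel _)
  have hDY : (D.map (tensorRight S.X₁)).Exact :=
    hD.map_of_epi_of_preservesCokernel _ inferInstance inferInstance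
  have hSW : (S.map (tensorRight D.X₃)).Exact :=
    hS.exact.map_of_epi_of_preservesCokernel _ hS.epi_g inferInstance
  have : Epi (D.map (tensorRight S.X₁)).g := (tensorRight S.X₁).map_epi D.g
  have : Mono (S.map (tensorRight D.X₃)).f := mono_whiskerRight_cokernel hS (S.gᘁ)
  have hev : S.gᘁ ▷ S.X₁ ≫ S.X₂ᘁ ◁ S.f ≫ ε_ _ _ = 0 := by
    rw [← whisker_exchange_assoc, rightAdjointMate_comp_evaluation, ← whiskerLeft_comp_assoc,
      S.zero, MonoidalPreadditive.whiskerLeft_zero, zero_comp]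
  have hcoev : (η_ _ _ ≫ S.X₂ ◁ cokernel.π (S.gᘁ)) ≫ S.g ▷ cokernel (S.gᘁ) = 0 := by
    rw [Category.assoc, whisker_exchange, ← coevaluation_comp_rightAdjointMate_assoc,
      ← whiskerLeft_comp, cokernel.condition, MonoidalPreadditive.whiskerLeft_zero, comp_zero]
  exact
    { rightDual := cokernel (S.gᘁ)
      exact := ExactPairing.ofMonoOfEpi S.f (cokernel.π _) (hDY.desc _ hev) (hSW.lift _ hcoev)
        (hDY.g_desc _ hev) (hSW.lift_f _ hcoev) }

end RightExact

/-- In an abelian braided monoidal category with right exact tensor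
product, given a short exact sequence `0 → Y → Z → X → 0`, if `Z` and `X` are rigid then so
is `Y`. -/
theorem statement11 (C : Type*) [Category C] [Abelian C] [MonoidalCategory C]
    [BraidedCategory C]
    (hre₁ : ∀ W : C, PreservesFiniteColimits (tensorLeft W))
    (hre₂ : ∀ W : C, PreservesFiniteColimits (tensorRight W))
    (S : ShortComplex C) (hS : S.ShortExact)
    (hZ : RigidObj S.X₂) (hX : RigidObj S.X₃) :
    RigidObj S.X₁ := by
  obtain ⟨-, ⟨_⟩⟩ := hZ
  obtain ⟨-, ⟨_⟩⟩ := hX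
  have := hasRightDualOfShortExact hS
  exact ⟨⟨BraidedCategory.hasLeftDualOfHasRightDual⟩, ⟨this⟩⟩
end

section
/- Let C be an abelian braided monoidal category with right exact tensor product, and let 0 → Y →^i Z → X → 0 be a short exact sequence with Y and Z rigid. If the dual morphism i* : Z* → Y* is an epimorphism, then X is rigid. -/
open CategoryTheory MonoidalCategory Limits

/-!
Put `D := ker(i*)`, a subobject of `Z*`. Since `i*` is an epimorphism, `0 → D → Z* → Y* → 0` is
short exact, and a diagram chase in the grid obtained by tensoring it with `Y → Z → X → 0` shows
that `X ⊗ D → X ⊗ Z*` is still a monomorphism, i.e. the kernel of `X ⊗ i*`. The evaluation of `Z`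
restricted to `D ⊗ Z` kills `D ⊗ Y`, so it descends to `D ⊗ X → 𝟙`; the coevaluation of `Z`
pushed to `X ⊗ Z*` is killed by `X ⊗ i*`, so it lifts to `𝟙 → X ⊗ D`. The zigzag identities for
`(X, D)` follow from those for `(Z, Z*)` after cancelling the epimorphism `Z → X` and the
monomorphism `D → Z*`. The braiding then turns the right dual `D` into a left dual.
-/

namespace CategoryTheory

variable {C : Type*} [Category C] [MonoidalCategory C]

section Rigid

variable (Y : C) [HasRightDual Y]

instance : (tensorLeft Y).IsRightAdjoint := ⟨_, ⟨tensorLeftAdjunction Y Yᘁ⟩⟩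

instance : (tensorRight Yᘁ).IsRightAdjoint := ⟨_, ⟨tensorRightAdjunction Y Yᘁ⟩⟩

end Rigid

namespace ExactPairing

abbrev ofEpiMono {Z Z' X D : C} [ExactPairing Z Z'] (p : Z ⟶ X) (k : D ⟶ Z') [Epi p] [Mono k]
    (coev : 𝟙_ C ⟶ X ⊗ D) (ev : D ⊗ X ⟶ 𝟙_ C)
    (hcoev : coev ≫ X ◁ k = η_ Z Z' ≫ p ▷ Z') (hev : D ◁ p ≫ ev = k ▷ Z ≫ ε_ Z Z') :
    ExactPairing X D where
  coevaluation' := coev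
  evaluation' := ev
  coevaluation_evaluation' := by
    have : Mono (𝟙_ C ◁ k) := by rw [id_whiskerLeft]; infer_instance
    rw [← cancel_mono (𝟙_ C ◁ k)]
    calc (D ◁ coev ≫ (α_ D X D).inv ≫ ev ▷ D) ≫ 𝟙_ C ◁ k
        = D ◁ (coev ≫ X ◁ k) ≫ (α_ D X Z').inv ≫ ev ▷ Z' := by
          simp only [Category.assoc, MonoidalCategory.whiskerLeft_comp]
          rw [← whisker_exchange, ← associator_inv_naturality_right_assoc]
      _ = D ◁ η_ Z Z' ≫ (α_ D Z Z').inv ≫ (D ◁ p ≫ ev) ▷ Z' := by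
          rw [hcoev, MonoidalCategory.whiskerLeft_comp, Category.assoc,
            associator_inv_naturality_middle_assoc, comp_whiskerRight]
      _ = k ▷ 𝟙_ C ≫ Z' ◁ η_ Z Z' ≫ (α_ Z' Z Z').inv ≫ ε_ Z Z' ▷ Z' := by
          rw [hev, comp_whiskerRight, ← associator_inv_naturality_left_assoc,
            whisker_exchange_assoc]
      _ = ((ρ_ D).hom ≫ (λ_ D).inv) ≫ 𝟙_ C ◁ k := by
          rw [ExactPairing.coevaluation_evaluation]
          simp
  evaluation_coevaluation' := by
    have : Epi (𝟙_ C ◁ p) := by rw [id_whiskerLeft]; infer_instance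
    rw [← cancel_epi (𝟙_ C ◁ p)]
    calc 𝟙_ C ◁ p ≫ coev ▷ X ≫ (α_ X D X).hom ≫ X ◁ ev
        = coev ▷ Z ≫ (α_ X D Z).hom ≫ X ◁ (D ◁ p ≫ ev) := by
          rw [whisker_exchange_assoc, associator_naturality_right_assoc,
            MonoidalCategory.whiskerLeft_comp]
      _ = (coev ≫ X ◁ k) ▷ Z ≫ (α_ X Z' Z).hom ≫ X ◁ ε_ Z Z' := by
          rw [hev, MonoidalCategory.whiskerLeft_comp, ← associator_naturality_middle_assoc,
            ← comp_whiskerRight_assoc]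
      _ = η_ Z Z' ▷ Z ≫ (α_ Z Z' Z).hom ≫ Z ◁ ε_ Z Z' ≫ p ▷ 𝟙_ C := by
          rw [hcoev, comp_whiskerRight_assoc, associator_naturality_left_assoc,
            ← whisker_exchange]
      _ = 𝟙_ C ◁ p ≫ (λ_ X).hom ≫ (ρ_ X).inv := by
          rw [ExactPairing.evaluation_coevaluation_assoc]
          simp

end ExactPairing

section Abelian

variable [Abelian C]

instance monoidalPreadditive_of_preservesFiniteColimits
    [∀ W : C, PreservesFiniteColimits (tensorLeft W)]
    [∀ W : C, PreservesFiniteColimits (tensorRight W)] : MonoidalPreadditive C :=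
  have (F : C ⥤ C) [PreservesFiniteColimits F] : F.Additive :=
    have := preservesBinaryBiproducts_of_preservesBinaryCoproducts F
    F.additive_of_preservesBinaryBiproducts
  { whiskerLeft_zero := (tensorLeft _).map_zero _ _
    zero_whiskerRight := (tensorRight _).map_zero _ _
    whiskerLeft_add := fun _ _ => (tensorLeft _).map_add
    add_whiskerRight := fun _ _ => (tensorRight _).map_add }

section Chase

open Abelian Abelian.Pseudoelement
open scoped Pseudoelement

theorem mono_whiskerLeft_of_exact [MonoidalPreadditive C] {S T : ShortComplex C}
    (hS : (S.map (tensorRight T.X₂)).Exact) (hT : (T.map (tensorLeft S.X₁)).Exact)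
    [Mono (S.f ▷ T.X₃)] [Mono (S.X₂ ◁ T.f)] [Epi (S.g ▷ T.X₁)] :
    Mono (S.X₃ ◁ T.f) := by
  have exS : ∀ b : Pseudoelement (S.X₂ ⊗ T.X₂), (S.g ▷ T.X₂) b = 0 → ∃ a, (S.f ▷ T.X₂) a = b :=
    pseudo_exact_of_exact hS
  have exT : ∀ b : Pseudoelement (S.X₁ ⊗ T.X₂), (S.X₁ ◁ T.g) b = 0 → ∃ a, (S.X₁ ◁ T.f) a = b :=
    pseudo_exact_of_exact hT
  apply mono_of_zero_of_map_zero
  intro t ht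
  obtain ⟨s, rfl⟩ := pseudo_surjective_of_epi (S.g ▷ T.X₁) t
  obtain ⟨u, hu⟩ := exS ((S.X₂ ◁ T.f) s) (by
    rw [← Pseudoelement.comp_apply, whisker_exchange, Pseudoelement.comp_apply, ht])
  obtain ⟨v, hv⟩ := exT u (by
    apply zero_of_map_zero _ (pseudo_injective_of_mono (S.f ▷ T.X₃))
    rw [← Pseudoelement.comp_apply, whisker_exchange, Pseudoelement.comp_apply, hu,
      ← Pseudoelement.comp_apply, ← MonoidalCategory.whiskerLeft_comp, T.zero,
      MonoidalPreadditive.whiskerLeft_zero, Pseudoelement.zero_apply])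
  have hvs : (S.f ▷ T.X₁) v = s := by
    apply pseudo_injective_of_mono (S.X₂ ◁ T.f)
    rw [← Pseudoelement.comp_apply, ← whisker_exchange, Pseudoelement.comp_apply, hv, hu]
  rw [← hvs, ← Pseudoelement.comp_apply, ← comp_whiskerRight, S.zero,
    MonoidalPreadditive.zero_whiskerRight, Pseudoelement.zero_apply]

end Chase

theorem whiskerLeft_comp_evaluation_eq_zero [MonoidalPreadditive C] {Y Z D : C}
    [HasRightDual Y] [HasRightDual Z] (f : Y ⟶ Z) (k : D ⟶ Zᘁ) (hk : k ≫ fᘁ = 0) :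
    D ◁ f ≫ k ▷ Z ≫ ε_ Z Zᘁ = 0 := by
  rw [whisker_exchange_assoc, ← rightAdjointMate_comp_evaluation, ← comp_whiskerRight_assoc,
    hk, MonoidalPreadditive.zero_whiskerRight, zero_comp]

theorem coevaluation_comp_whiskerLeft_eq_zero [MonoidalPreadditive C] {X Y Z : C}
    [HasRightDual Y] [HasRightDual Z] (f : Y ⟶ Z) (g : Z ⟶ X) (hfg : f ≫ g = 0) :
    (η_ Z Zᘁ ≫ g ▷ Zᘁ) ≫ X ◁ fᘁ = 0 := by
  rw [Category.assoc, ← whisker_exchange, coevaluation_comp_rightAdjointMate_assoc,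
    ← comp_whiskerRight, hfg, MonoidalPreadditive.zero_whiskerRight, comp_zero]

variable {S : ShortComplex C} [HasRightDual S.X₁] [HasRightDual S.X₂]

variable (S) in
noncomputable abbrev kernelRightAdjointMate : ShortComplex C :=
  ShortComplex.mk (kernel.ι ((S.f)ᘁ)) ((S.f)ᘁ) (kernel.condition _)

theorem exact_kernelRightAdjointMate : (kernelRightAdjointMate S).Exact :=
  ShortComplex.exact_of_f_is_kernel _ (kernelIsKernel _)

variable [∀ W : C, PreservesFiniteColimits (tensorLeft W)]
  [∀ W : C, PreservesFiniteColimits (tensorRight W)]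

theorem mono_whiskerLeft_kernel_ι (hS : S.Exact) [Mono S.f] [Epi S.g] :
    Mono (S.X₃ ◁ kernel.ι ((S.f)ᘁ)) := by
  have : Mono (S.f ▷ S.X₁ᘁ) := (tensorRight _).map_mono S.f
  have : Mono (S.X₂ ◁ kernel.ι ((S.f)ᘁ)) := (tensorLeft _).map_mono _
  have : Epi (S.g ▷ kernel ((S.f)ᘁ)) := (tensorRight _).map_epi _
  exact mono_whiskerLeft_of_exact (T := kernelRightAdjointMate S) (hS.map _)
    (exact_kernelRightAdjointMate.map _)

noncomputable abbrev hasRightDualOfEpiRightAdjointMate (hS : S.Exact) [Mono S.f] [Epi S.g]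
    [Epi ((S.f)ᘁ)] : HasRightDual S.X₃ :=
  have : Mono ((kernelRightAdjointMate S).map (tensorLeft S.X₃)).f := mono_whiskerLeft_kernel_ι hS
  have : Epi (S.map (tensorLeft (kernel ((S.f)ᘁ)))).g := (tensorLeft _).map_epi S.g
  have hDS := hS.map_of_epi_of_preservesCokernel (tensorLeft (kernel ((S.f)ᘁ)))
    inferInstance inferInstance
  have hXT := exact_kernelRightAdjointMate.map_of_epi_of_preservesCokernel
    (tensorLeft S.X₃) inferInstance inferInstance
  { rightDual := kernel ((S.f)ᘁ)
    exact := .ofEpiMono S.g (kernel.ι ((S.f)ᘁ))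
      (hXT.lift _ (coevaluation_comp_whiskerLeft_eq_zero _ _ S.zero))
      (hDS.desc _ (whiskerLeft_comp_evaluation_eq_zero _ _ (kernel.condition _)))
      (hXT.lift_f _ _) (hDS.g_desc _ _) }

end Abelian

end CategoryTheory

theorem statement12_general (C : Type*) [Category C] [Abelian C] [MonoidalCategory C]
    [BraidedCategory C]
    (hre₁ : ∀ W : C, PreservesFiniteColimits (tensorLeft W))
    (hre₂ : ∀ W : C, PreservesFiniteColimits (tensorRight W))
    (S : ShortComplex C) (hS : S.ShortExact)
    [HasRightDual S.X₁] [HasRightDual S.X₂]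
    (hepi : Epi ((S.f)ᘁ)) :
    RigidObj S.X₃ := by
  have := hS.mono_f
  have := hS.epi_g
  let := hasRightDualOfEpiRightAdjointMate hS.exact
  exact ⟨⟨BraidedCategory.hasLeftDualOfHasRightDual⟩, ⟨inferInstance⟩⟩

/-- In an abelian braided monoidal category with right exact tensor
product, given a short exact sequence `0 → Y →ⁱ Z → X → 0` with `Y` and `Z` rigid, if the
dual morphism `i* : Z* → Y*` (the mate of `i`) is an epimorphism, then `X` is rigid. -/
theorem statement12 (C : Type*) [Category C] [Abelian C] [MonoidalCategory C]
    [BraidedCategory C]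
    (hre₁ : ∀ W : C, PreservesFiniteColimits (tensorLeft W))
    (hre₂ : ∀ W : C, PreservesFiniteColimits (tensorRight W))
    (S : ShortComplex C) (hS : S.ShortExact)
    [HasRightDual S.X₁] [HasRightDual S.X₂]
    (hY : RigidObj S.X₁) (hZ : RigidObj S.X₂)
    (hepi : Epi ((S.f)ᘁ)) :
    RigidObj S.X₃ :=
  statement12_general C hre₁ hre₂ S hS hepi
end

section
/- Let C be an artinian monoidal abelian category over an algebraically closed field that is 2-out-of-3 rigid (in every short exact sequence, if two of the three terms are rigid then so is the third). Suppose Irr(C) admits a recursive filtration relative to a subset S of rigid simple objects: an exhaustive increasing filtration Irr_n(C) such that each X ∈ Irr_n(C) appears with multiplicity one in the composition series of some tensor product X_1 ⊗ ⋯ ⊗ X_m of objects whose composition factors lie in S, with all other composition factors in Irr_{n-1}(C). Then every object of C is rigid. -/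
open CategoryTheory MonoidalCategory Limits

/-- `Filt P T`: the object `T` admits a finite filtration all of whose subquotients
satisfy `P` (so the composition factors of `T` all lie in `P`, when `P` selects simples). -/
inductive Filt {C : Type*} [Category C] [Abelian C] (P : C → Prop) : C → Prop
  | of_isZero {T : C} (h : IsZero T) : Filt P T
  | of_ext {S : ShortComplex C} (hS : S.ShortExact) (h1 : Filt P S.X₁) (h3 : P S.X₃) :
      Filt P S.X₂

/-- `FiltOneOf Q X T`: the object `T` has a composition series consisting of a single copy
of `X` together with factors satisfying `Q`; witnessed by a three-step filtration
`Z ⊆ T' ⊆ T` with `Filt Q Z`, `T'/Z ≅ X` and `Filt Q (T/T')`. -/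
def FiltOneOf {C : Type*} [Category C] [Abelian C] (Q : C → Prop) (X T : C) : Prop :=
  ∃ S1 S2 : ShortComplex C, S1.ShortExact ∧ S2.ShortExact ∧
    Filt Q S1.X₁ ∧ Nonempty (S1.X₃ ≅ X) ∧
    Nonempty (S2.X₁ ≅ S1.X₂) ∧ Filt Q S2.X₃ ∧ Nonempty (S2.X₂ ≅ T)

/-!
The simple objects are rigid by induction along the filtration `Irr`: a simple `X ∈ Irr n`
is a subquotient `T'/Z` of a tensor product `T` of objects with composition factors in `S`,
where `Z` and `T/T'` have composition factors in lower layers. Then `T` is rigid, hence `T'`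
and `X` are by two applications of 2-out-of-3, and every object, being an iterated extension
of simple ones, is rigid.
-/

namespace RigidObj

variable {C : Type*} [Category C] [MonoidalCategory C]

lemma unit : RigidObj (𝟙_ C) := ⟨⟨inferInstance⟩, ⟨inferInstance⟩⟩

lemma tensor {X Y : C} (hX : RigidObj X) (hY : RigidObj Y) : RigidObj (X ⊗ Y) := by
  obtain ⟨⟨_⟩, ⟨_⟩⟩ := hX
  obtain ⟨⟨_⟩, ⟨_⟩⟩ := hY
  exact ⟨⟨{ leftDual := (ᘁY : C) ⊗ (ᘁX : C) }⟩, ⟨{ rightDual := Yᘁ ⊗ Xᘁ }⟩⟩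

lemma of_iso {X Y : C} (e : X ≅ Y) (hY : RigidObj Y) : RigidObj X := by
  obtain ⟨⟨_⟩, ⟨_⟩⟩ := hY
  exact ⟨⟨{ leftDual := (ᘁY : C), exact := exactPairingCongrRight e }⟩,
    ⟨{ rightDual := Yᘁ, exact := exactPairingCongrLeft e }⟩⟩

lemma foldr_tensor {l : List C} (h : ∀ X ∈ l, RigidObj X) :
    RigidObj (l.foldr (fun A B => A ⊗ B) (𝟙_ C)) := by
  induction l with
  | nil => exact unit
  | cons X l ih =>
    exact tensor (h X List.mem_cons_self) (ih fun Y hY => h Y (List.mem_cons_of_mem X hY))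

end RigidObj

def IsTwoOutOfThreeRigid (C : Type*) [Category C] [Abelian C] [MonoidalCategory C] : Prop :=
  ∀ S : ShortComplex C, S.ShortExact →
    ((RigidObj S.X₁ ∧ RigidObj S.X₂ → RigidObj S.X₃) ∧
     (RigidObj S.X₁ ∧ RigidObj S.X₃ → RigidObj S.X₂) ∧
     (RigidObj S.X₂ ∧ RigidObj S.X₃ → RigidObj S.X₁))

namespace IsTwoOutOfThreeRigid

variable {C : Type*} [Category C] [Abelian C] [MonoidalCategory C]
  (h23 : IsTwoOutOfThreeRigid C)
include h23

lemma rigidObj_of_isZero {T : C} (hT : IsZero T) : RigidObj T := by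
  let S : ShortComplex C := ShortComplex.mk (0 : T ⟶ 𝟙_ C) (𝟙 (𝟙_ C)) (by simp)
  have : Mono S.f := ⟨fun u v _ => hT.eq_of_tgt u v⟩
  have hS : S.Exact := (S.exact_iff_mono rfl).mpr inferInstance
  exact (h23 S ⟨hS⟩).2.2 ⟨RigidObj.unit, RigidObj.unit⟩

lemma rigidObj_of_filt {P : C → Prop} (hP : ∀ X, P X → RigidObj X) {T : C}
    (hT : Filt P T) : RigidObj T := by
  induction hT with
  | of_isZero h => exact h23.rigidObj_of_isZero h
  | of_ext hS _ h3 ih => exact (h23 _ hS).2.1 ⟨ih, hP _ h3⟩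

lemma rigidObj_of_filtOneOf {Q : C → Prop} (hQ : ∀ X, Q X → RigidObj X) {X T : C}
    (hXT : FiltOneOf Q X T) (hT : RigidObj T) : RigidObj X := by
  obtain ⟨S1, S2, hS1, hS2, hZ, ⟨e13⟩, ⟨e21⟩, hQuot, ⟨e2T⟩⟩ := hXT
  have hT' : RigidObj S1.X₂ :=
    .of_iso e21.symm ((h23 S2 hS2).2.2 ⟨.of_iso e2T hT, h23.rigidObj_of_filt hQ hQuot⟩)
  exact .of_iso e13.symm ((h23 S1 hS1).1 ⟨h23.rigidObj_of_filt hQ hZ, hT'⟩)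

lemma rigidObj_of_mem_layer (Sset : Set C) (hSset : ∀ X ∈ Sset, RigidObj X)
    (Irr : ℕ → Set C)
    (hrec : ∀ n : ℕ, ∀ X ∈ Irr n, ∃ (m : ℕ) (Xs : Fin m → C),
      (∀ i, Filt (fun T => T ∈ Sset) (Xs i)) ∧
      FiltOneOf (fun T => ∃ m' < n, T ∈ Irr m') X
        ((List.ofFn Xs).foldr (fun A B => A ⊗ B) (𝟙_ C)))
    (n : ℕ) : ∀ X ∈ Irr n, RigidObj X := by
  induction n using Nat.strong_induction_on with
  | _ n ih =>
    intro X hX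
    obtain ⟨m, Xs, hXs, hXT⟩ := hrec n X hX
    refine h23.rigidObj_of_filtOneOf (fun T ⟨m', hm', hT⟩ => ih m' hm' T hT) hXT ?_
    refine RigidObj.foldr_tensor fun Y hY => ?_
    obtain ⟨i, rfl⟩ := List.mem_ofFn.mp hY
    exact h23.rigidObj_of_filt hSset (hXs i)

end IsTwoOutOfThreeRigid

theorem statement15_general
    (C : Type*) [Category C] [Abelian C] [MonoidalCategory C] [Preadditive C]
    (hartin : ∀ X : C, Filt (fun T : C => Simple T) X)
    (h23 : ∀ S : ShortComplex C, S.ShortExact →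
      ((RigidObj S.X₁ ∧ RigidObj S.X₂ → RigidObj S.X₃) ∧
       (RigidObj S.X₁ ∧ RigidObj S.X₃ → RigidObj S.X₂) ∧
       (RigidObj S.X₂ ∧ RigidObj S.X₃ → RigidObj S.X₁)))
    (Sset : Set C)
    (hSset : ∀ X ∈ Sset, Simple X ∧ RigidObj X)
    (Irr : ℕ → Set C)
    (hIrrExh : ∀ X : C, Simple X → ∃ n, X ∈ Irr n)
    (hrec : ∀ n : ℕ, ∀ X ∈ Irr n, ∃ (m : ℕ) (Xs : Fin m → C),
      (∀ i, Filt (fun T => T ∈ Sset) (Xs i)) ∧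
      FiltOneOf (fun T => ∃ m' < n, T ∈ Irr m') X
        ((List.ofFn Xs).foldr (fun A B => A ⊗ B) (𝟙_ C))) :
    ∀ X : C, RigidObj X := by
  -- `h23` is stated with the zero morphisms of `[Preadditive C]`; they agree with the abelian ones.
  have h23 : IsTwoOutOfThreeRigid C := by
    rwa [Subsingleton.elim (α := HasZeroMorphisms C) Preadditive.preadditiveHasZeroMorphisms
      (@Preadditive.preadditiveHasZeroMorphisms C _ Abelian.toPreadditive)] at h23
  have hsimple : ∀ X : C, Simple X → RigidObj X := fun X hX =>
    have ⟨n, hn⟩ := hIrrExh X hX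
    h23.rigidObj_of_mem_layer Sset (fun Y hY => (hSset Y hY).2) Irr hrec n X hn
  exact fun X => h23.rigidObj_of_filt hsimple (hartin X)

/-- Let `C` be an artinian monoidal abelian category over an algebraically
closed field `k` which is 2-out-of-3 rigid, and suppose the simple objects of `C` admit a
recursive filtration `Irr_n` relative to a set `S` of rigid simple objects: every
`X ∈ Irr_n` occurs with multiplicity one in the composition series of some tensor product
`X_1 ⊗ ⋯ ⊗ X_m` of objects with composition factors in `S`, all the other composition
factors lying in `⋃_{m < n} Irr_m`.  Then every object of `C` is rigid. -/
theorem statement15 (k : Type*) [Field k] [IsAlgClosed k]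
    (C : Type*) [Category C] [Abelian C] [MonoidalCategory C] [Preadditive C] [Linear k C]
    (hhom : ∀ X Y : C, FiniteDimensional k (X ⟶ Y))
    (hartin : ∀ X : C, Filt (fun T : C => Simple T) X)
    (h23 : ∀ S : ShortComplex C, S.ShortExact →
      ((RigidObj S.X₁ ∧ RigidObj S.X₂ → RigidObj S.X₃) ∧
       (RigidObj S.X₁ ∧ RigidObj S.X₃ → RigidObj S.X₂) ∧
       (RigidObj S.X₂ ∧ RigidObj S.X₃ → RigidObj S.X₁)))
    (Sset : Set C)
    (hSset : ∀ X ∈ Sset, Simple X ∧ RigidObj X)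
    (Irr : ℕ → Set C)
    (hIrrSimple : ∀ n, ∀ X ∈ Irr n, Simple X)
    (hIrrMono : Monotone Irr)
    (hIrrExh : ∀ X : C, Simple X → ∃ n, X ∈ Irr n)
    (hrec : ∀ n : ℕ, ∀ X ∈ Irr n, ∃ (m : ℕ) (Xs : Fin m → C),
      (∀ i, Filt (fun T => T ∈ Sset) (Xs i)) ∧
      FiltOneOf (fun T => ∃ m' < n, T ∈ Irr m') X
        ((List.ofFn Xs).foldr (fun A B => A ⊗ B) (𝟙_ C))) :
    ∀ X : C, RigidObj X :=
  statement15_general C hartin h23 Sset hSset Irr hIrrExh hrec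
end
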